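/- Fix q ≥ 0. The ground-state energy is strictly increasing in the magnetization: for all 0 ≤ M < M' ≤ 1, E_g(M, q) < E_g(M', q). -/

import Mathlib

/-!
Take a state `u` of magnetization `M'` whose energy is close to `E_g(M', q)` and replace
`(u₁, u₋₁)` by `(√(a u₁² + b u₋₁²), √(b u₁² + a u₋₁²))` with `a + b = 1`, `a - b = M / M'`.
This keeps `|u|²` and `u₁² + u₋₁²`, multiplies `u₁² - u₋₁²` by `M / M'`, and does not increase
the term `u₀² (u₁ - u₋₁)²` or the kinetic energy (by Cauchy–Schwarz,
`|∇√(a f² + b g²)|² ≤ a |∇f|² + b |∇g|²`); the new functions are still `C¹` because at a common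
zero of `u₁, u₋₁` both derivatives vanish. Hence
`E_g(M) ≤ ℰ[u] - β_s (1 - (M/M')²) ∫ (u₁² - u₋₁²)²`.
The last integral is bounded below uniformly: since `V → ∞`, a state of bounded energy keeps
magnetization at least `M'/2` in a fixed ball `B`, and Cauchy–Schwarz on `B` gives
`∫ (u₁² - u₋₁²)² ≥ M'² / (4 |B|)`.
-/

open MeasureTheory
open scoped RealInnerProductSpace

noncomputable section

abbrev E3 := EuclideanSpace ℝ (Fin 3)

/-- Pointwise squared norm `|u|² = u₁² + u₀² + u₋₁²` of a triple of functions. -/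
def nsq (u1 u0 um1 : E3 → ℝ) (x : E3) : ℝ := u1 x ^ 2 + u0 x ^ 2 + um1 x ^ 2

/-- The energy functional `ℰ_q[u]`. -/
def energy (V : E3 → ℝ) (βn βs q : ℝ) (u1 u0 um1 : E3 → ℝ) : ℝ :=
  ∫ x : E3,
    (‖gradient u1 x‖ ^ 2 + ‖gradient u0 x‖ ^ 2 + ‖gradient um1 x‖ ^ 2
      + V x * nsq u1 u0 um1 x
      + βn * (nsq u1 u0 um1 x) ^ 2
      + βs * (2 * u0 x ^ 2 * (u1 x - um1 x) ^ 2 + (u1 x ^ 2 - um1 x ^ 2) ^ 2)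
      + q * (u1 x ^ 2 + um1 x ^ 2))

/-- The admissible class `𝔸_M`: triples of nonnegative `C¹` functions with the
required integrability and the constraints `𝒩[u] = 1`, `ℳ[u] = M`. -/
structure Admissible (V : E3 → ℝ) (M : ℝ) (u1 u0 um1 : E3 → ℝ) : Prop where
  smooth1 : ContDiff ℝ 1 u1
  smooth0 : ContDiff ℝ 1 u0
  smoothm1 : ContDiff ℝ 1 um1
  nonneg1 : ∀ x, 0 ≤ u1 x
  nonneg0 : ∀ x, 0 ≤ u0 x
  nonnegm1 : ∀ x, 0 ≤ um1 x
  l2_1 : Integrable (fun x => u1 x ^ 2)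
  l2_0 : Integrable (fun x => u0 x ^ 2)
  l2_m1 : Integrable (fun x => um1 x ^ 2)
  grad2_1 : Integrable (fun x => ‖gradient u1 x‖ ^ 2)
  grad2_0 : Integrable (fun x => ‖gradient u0 x‖ ^ 2)
  grad2_m1 : Integrable (fun x => ‖gradient um1 x‖ ^ 2)
  l4_1 : Integrable (fun x => u1 x ^ 4)
  l4_0 : Integrable (fun x => u0 x ^ 4)
  l4_m1 : Integrable (fun x => um1 x ^ 4)
  pot : Integrable (fun x => V x * nsq u1 u0 um1 x)
  mass : ∫ x : E3, nsq u1 u0 um1 x = 1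
  magnetization : ∫ x : E3, (u1 x ^ 2 - um1 x ^ 2) = M

/-- Hypotheses on the trap potential `V`: measurable, nonnegative, locally bounded,
and tending to infinity at infinity. -/
structure TrapPotential (V : E3 → ℝ) : Prop where
  meas : Measurable V
  nonneg : ∀ x, 0 ≤ V x
  bddOnBalls : ∀ r : ℝ, ∃ C : ℝ, ∀ x : E3, ‖x‖ ≤ r → V x ≤ C
  tendsToInfty : ∀ C : ℝ, 0 < C → ∃ R : ℝ, 0 < R ∧ ∀ x : E3, R ≤ ‖x‖ → C ≤ V x

/-- `u` is a ground state: admissible and minimizes the energy over `𝔸_M`. -/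
def IsGroundState (V : E3 → ℝ) (βn βs q M : ℝ) (u1 u0 um1 : E3 → ℝ) : Prop :=
  Admissible V M u1 u0 um1 ∧
    ∀ v1 v0 vm1 : E3 → ℝ, Admissible V M v1 v0 vm1 →
      energy V βn βs q u1 u0 um1 ≤ energy V βn βs q v1 v0 vm1

/-- The ground-state energy `E_g(M,q) = inf {ℰ_q[u] : u ∈ 𝔸_M}`. -/
def groundEnergy (V : E3 → ℝ) (βn βs q M : ℝ) : ℝ :=
  sInf {E : ℝ | ∃ u1 u0 um1 : E3 → ℝ, Admissible V M u1 u0 um1 ∧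
    energy V βn βs q u1 u0 um1 = E}

open Filter Asymptotics

lemma weighted_cauchy_schwarz {a b : ℝ} (ha : 0 ≤ a) (hb : 0 ≤ b) (s t S T : ℝ) :
    a * s * S + b * t * T ≤ √(a * s ^ 2 + b * t ^ 2) * √(a * S ^ 2 + b * T ^ 2) := by
  rw [← Real.sqrt_mul (by positivity)]
  refine (le_abs_self _).trans (Real.abs_le_sqrt ?_)
  nlinarith [mul_nonneg (mul_nonneg ha hb) (sq_nonneg (s * T - t * S))]

def sqrtMix {α : Type*} (a b : ℝ) (f g : α → ℝ) (x : α) : ℝ := √(a * f x ^ 2 + b * g x ^ 2)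

section SqrtMixPointwise

variable {α : Type*} {f g : α → ℝ} {a b : ℝ} {x : α}

lemma sq_sqrtMix (ha : 0 ≤ a) (hb : 0 ≤ b) :
    sqrtMix a b f g x ^ 2 = a * f x ^ 2 + b * g x ^ 2 :=
  Real.sq_sqrt (by positivity)

lemma sqrtMix_le (ha : 0 ≤ a) (hb : 0 ≤ b) (hfx : 0 ≤ f x) (hgx : 0 ≤ g x) :
    sqrtMix a b f g x ≤ √a * f x + √b * g x := by
  refine Real.sqrt_le_iff.mpr ⟨by positivity, ?_⟩
  nlinarith [Real.sq_sqrt ha, Real.sq_sqrt hb,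
    mul_nonneg (mul_nonneg (Real.sqrt_nonneg a) hfx) (mul_nonneg (Real.sqrt_nonneg b) hgx)]

lemma eq_zero_and_eq_zero_of_weighted_sq_eq_zero (ha : 0 < a) (hb : 0 < b)
    (h : a * f x ^ 2 + b * g x ^ 2 = 0) : f x = 0 ∧ g x = 0 := by
  obtain ⟨hfx, hgx⟩ := (add_eq_zero_iff_of_nonneg (by positivity) (by positivity)).mp h
  exact ⟨by simpa [ha.ne'] using hfx, by simpa [hb.ne'] using hgx⟩

lemma sq_sqrtMix_add_sq_sqrtMix_swap (ha : 0 ≤ a) (hb : 0 ≤ b) (hab : a + b = 1) :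
    sqrtMix a b f g x ^ 2 + sqrtMix b a f g x ^ 2 = f x ^ 2 + g x ^ 2 := by
  rw [sq_sqrtMix ha hb, sq_sqrtMix hb ha]
  linear_combination (f x ^ 2 + g x ^ 2) * hab

lemma sq_sqrtMix_sub_sq_sqrtMix_swap (ha : 0 ≤ a) (hb : 0 ≤ b) :
    sqrtMix a b f g x ^ 2 - sqrtMix b a f g x ^ 2 = (a - b) * (f x ^ 2 - g x ^ 2) := by
  rw [sq_sqrtMix ha hb, sq_sqrtMix hb ha]
  ring

lemma mul_le_sqrtMix_mul_sqrtMix_swap (ha : 0 ≤ a) (hb : 0 ≤ b) (hab : a + b = 1) :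
    f x * g x ≤ sqrtMix a b f g x * sqrtMix b a f g x := by
  rw [sqrtMix, sqrtMix, ← Real.sqrt_mul (by positivity)]
  refine (le_abs_self _).trans (Real.abs_le_sqrt ?_)
  have hgap : (a * f x ^ 2 + b * g x ^ 2) * (b * f x ^ 2 + a * g x ^ 2) - (f x * g x) ^ 2
      = a * b * (f x ^ 2 - g x ^ 2) ^ 2 := by
    linear_combination (a + b + 1) * (f x ^ 2 * g x ^ 2) * hab
  nlinarith [mul_nonneg (mul_nonneg ha hb) (sq_nonneg (f x ^ 2 - g x ^ 2))]

lemma sq_sqrtMix_sub_sqrtMix_swap_le (ha : 0 ≤ a) (hb : 0 ≤ b) (hab : a + b = 1) :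
    (sqrtMix a b f g x - sqrtMix b a f g x) ^ 2 ≤ (f x - g x) ^ 2 := by
  nlinarith [sq_sqrtMix_add_sq_sqrtMix_swap (f := f) (g := g) (x := x) ha hb hab,
    mul_le_sqrtMix_mul_sqrtMix_swap (f := f) (g := g) (x := x) ha hb hab]

lemma sqrtMix_pow_four_le (ha : 0 ≤ a) (hb : 0 ≤ b) (hab : a + b = 1) :
    sqrtMix a b f g x ^ 4 ≤ f x ^ 4 + g x ^ 4 := by
  rw [show sqrtMix a b f g x ^ 4 = (sqrtMix a b f g x ^ 2) ^ 2 by ring, sq_sqrtMix ha hb]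
  nlinarith [mul_nonneg ha hb, mul_nonneg (mul_nonneg ha hb) (sq_nonneg (f x ^ 2 - g x ^ 2)),
    mul_nonneg ha (sq_nonneg (f x ^ 2)), mul_nonneg hb (sq_nonneg (g x ^ 2))]

end SqrtMixPointwise

section SqrtMixCalculus

variable {E : Type*} [NormedAddCommGroup E] [NormedSpace ℝ E] {f g : E → ℝ} {a b : ℝ} {x : E}

lemma hasFDerivAt_zero_of_nonneg_of_eq_zero (hf : DifferentiableAt ℝ f x) (hf0 : ∀ y, 0 ≤ f y)
    (hfx : f x = 0) : HasFDerivAt f (0 : E →L[ℝ] ℝ) x := by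
  have hmin : IsLocalMin f x := Eventually.of_forall fun y => hfx ▸ hf0 y
  exact hmin.fderiv_eq_zero ▸ hf.hasFDerivAt

lemma hasFDerivAt_sqrtMix_of_eq_zero (ha : 0 < a) (hb : 0 < b)
    (hf : DifferentiableAt ℝ f x) (hg : DifferentiableAt ℝ g x)
    (hf0 : ∀ y, 0 ≤ f y) (hg0 : ∀ y, 0 ≤ g y) (hx : a * f x ^ 2 + b * g x ^ 2 = 0) :
    HasFDerivAt (sqrtMix a b f g) (0 : E →L[ℝ] ℝ) x := by
  obtain ⟨hfx, hgx⟩ := eq_zero_and_eq_zero_of_weighted_sq_eq_zero ha hb hx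
  have hsum : HasFDerivAt (fun y => √a * f y + √b * g y) (0 : E →L[ℝ] ℝ) x := by
    simpa using ((hasFDerivAt_zero_of_nonneg_of_eq_zero hf hf0 hfx).const_mul √a).fun_add
      ((hasFDerivAt_zero_of_nonneg_of_eq_zero hg hg0 hgx).const_mul √b)
  refine HasFDerivAt.of_isLittleO (IsBigO.trans_isLittleO ?_ hsum.isLittleO)
  refine IsBigO.of_bound 1 (Eventually.of_forall fun y => ?_)
  simp only [sqrtMix, hfx, hgx, ne_eq, OfNat.ofNat_ne_zero, not_false_eq_true, zero_pow, mul_zero,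
    add_zero, Real.sqrt_zero, sub_zero, zero_apply, one_mul, Real.norm_eq_abs]
  rw [abs_of_nonneg (Real.sqrt_nonneg _)]
  exact (sqrtMix_le ha.le hb.le (hf0 y) (hg0 y)).trans (le_abs_self _)

/-- At common zeros of `f` and `g` this is `0`, the true derivative there, because `(√0)⁻¹ = 0`. -/
def sqrtMixDeriv (a b : ℝ) (f g : E → ℝ) (x : E) : E →L[ℝ] ℝ :=
  (sqrtMix a b f g x)⁻¹ • ((a * f x) • fderiv ℝ f x + (b * g x) • fderiv ℝ g x)

lemma hasFDerivAt_sqrtMix (ha : 0 < a) (hb : 0 < b)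
    (hf : DifferentiableAt ℝ f x) (hg : DifferentiableAt ℝ g x)
    (hf0 : ∀ y, 0 ≤ f y) (hg0 : ∀ y, 0 ≤ g y) :
    HasFDerivAt (sqrtMix a b f g) (sqrtMixDeriv a b f g x) x := by
  by_cases hx : a * f x ^ 2 + b * g x ^ 2 = 0
  · simpa [sqrtMixDeriv, sqrtMix, hx] using
      hasFDerivAt_sqrtMix_of_eq_zero ha hb hf hg hf0 hg0 hx
  have hsq : HasFDerivAt (fun y => a * f y ^ 2 + b * g y ^ 2)
      ((2 * a * f x) • fderiv ℝ f x + (2 * b * g x) • fderiv ℝ g x) x := by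
    refine (((hf.hasFDerivAt.pow 2).const_mul a).fun_add
      ((hg.hasFDerivAt.pow 2).const_mul b)).congr_fderiv ?_
    simp only [smul_smul, nsmul_eq_mul]
    module
  refine ((Real.hasDerivAt_sqrt hx).comp_hasFDerivAt x hsq).congr_fderiv ?_
  have : √(a * f x ^ 2 + b * g x ^ 2) ≠ 0 := by positivity
  simp only [sqrtMixDeriv, sqrtMix, smul_add, smul_smul]
  congr 2 <;> field_simp

lemma norm_sqrtMixDeriv_le (ha : 0 ≤ a) (hb : 0 ≤ b) (hfx : 0 ≤ f x) (hgx : 0 ≤ g x) :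
    ‖sqrtMixDeriv a b f g x‖
      ≤ √(a * ‖fderiv ℝ f x‖ ^ 2 + b * ‖fderiv ℝ g x‖ ^ 2) := by
  set r := sqrtMix a b f g x
  have hr : 0 ≤ r := Real.sqrt_nonneg _
  calc ‖sqrtMixDeriv a b f g x‖
      ≤ r⁻¹ * (a * f x * ‖fderiv ℝ f x‖ + b * g x * ‖fderiv ℝ g x‖) := by
        rw [sqrtMixDeriv, norm_smul, Real.norm_of_nonneg (inv_nonneg.mpr hr)]
        gcongr
        refine (norm_add_le _ _).trans ?_
        rw [norm_smul, norm_smul, Real.norm_of_nonneg (by positivity),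
          Real.norm_of_nonneg (by positivity)]
    _ ≤ r⁻¹ * (r * √(a * ‖fderiv ℝ f x‖ ^ 2 + b * ‖fderiv ℝ g x‖ ^ 2)) := by
        gcongr
        exact weighted_cauchy_schwarz ha hb _ _ _ _
    _ ≤ √(a * ‖fderiv ℝ f x‖ ^ 2 + b * ‖fderiv ℝ g x‖ ^ 2) := by
        rw [← mul_assoc]
        exact mul_le_of_le_one_left (Real.sqrt_nonneg _) inv_mul_le_one

lemma continuous_sqrtMixDeriv (ha : 0 < a) (hb : 0 < b)
    (hf : ContDiff ℝ 1 f) (hg : ContDiff ℝ 1 g) (hf0 : ∀ y, 0 ≤ f y) (hg0 : ∀ y, 0 ≤ g y) :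
    Continuous (sqrtMixDeriv a b f g) := by
  have hf' := hf.continuous_fderiv one_ne_zero
  have hg' := hg.continuous_fderiv one_ne_zero
  have hF : Continuous fun y => a * f y ^ 2 + b * g y ^ 2 := by
    have := hf.continuous; have := hg.continuous; fun_prop
  refine continuous_iff_continuousAt.mpr fun x => ?_
  by_cases hx : a * f x ^ 2 + b * g x ^ 2 = 0
  · obtain ⟨hfx, hgx⟩ := eq_zero_and_eq_zero_of_weighted_sq_eq_zero ha hb hx
    have hf'x :=
      (hasFDerivAt_zero_of_nonneg_of_eq_zero (hf.differentiable one_ne_zero x) hf0 hfx).fderiv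
    have hg'x :=
      (hasFDerivAt_zero_of_nonneg_of_eq_zero (hg.differentiable one_ne_zero x) hg0 hgx).fderiv
    have hbound : Continuous fun y => √(a * ‖fderiv ℝ f y‖ ^ 2 + b * ‖fderiv ℝ g y‖ ^ 2) := by
      fun_prop
    rw [ContinuousAt, show sqrtMixDeriv a b f g x = 0 by simp [sqrtMixDeriv, hfx, hgx]]
    refine squeeze_zero_norm (fun y => norm_sqrtMixDeriv_le ha.le hb.le (hf0 y) (hg0 y)) ?_
    simpa [hf'x, hg'x] using hbound.tendsto x
  · exact ((Real.continuous_sqrt.comp hF).continuousAt.inv₀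
      (show √(a * f x ^ 2 + b * g x ^ 2) ≠ 0 by positivity)).smul
      (((continuous_const.mul hf.continuous).smul hf').add
        ((continuous_const.mul hg.continuous).smul hg')).continuousAt

lemma fderiv_sqrtMix (ha : 0 < a) (hb : 0 < b) (hf : Differentiable ℝ f)
    (hg : Differentiable ℝ g) (hf0 : ∀ y, 0 ≤ f y) (hg0 : ∀ y, 0 ≤ g y) :
    fderiv ℝ (sqrtMix a b f g) = sqrtMixDeriv a b f g :=
  funext fun x => (hasFDerivAt_sqrtMix ha hb (hf x) (hg x) hf0 hg0).fderiv

lemma contDiff_sqrtMix (ha : 0 < a) (hb : 0 < b) (hf : ContDiff ℝ 1 f)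
    (hg : ContDiff ℝ 1 g) (hf0 : ∀ y, 0 ≤ f y) (hg0 : ∀ y, 0 ≤ g y) :
    ContDiff ℝ 1 (sqrtMix a b f g) := by
  have hfd := hf.differentiable one_ne_zero
  have hgd := hg.differentiable one_ne_zero
  refine contDiff_one_iff_fderiv.mpr ⟨fun x => ?_, ?_⟩
  · exact (hasFDerivAt_sqrtMix ha hb (hfd x) (hgd x) hf0 hg0).differentiableAt
  · rw [fderiv_sqrtMix ha hb hfd hgd hf0 hg0]
    exact continuous_sqrtMixDeriv ha hb hf hg hf0 hg0

lemma sq_norm_fderiv_sqrtMix_le (ha : 0 < a) (hb : 0 < b) (hf : Differentiable ℝ f)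
    (hg : Differentiable ℝ g) (hf0 : ∀ y, 0 ≤ f y) (hg0 : ∀ y, 0 ≤ g y) (x : E) :
    ‖fderiv ℝ (sqrtMix a b f g) x‖ ^ 2
      ≤ a * ‖fderiv ℝ f x‖ ^ 2 + b * ‖fderiv ℝ g x‖ ^ 2 := by
  rw [fderiv_sqrtMix ha hb hf hg hf0 hg0]
  exact (Real.le_sqrt (norm_nonneg _) (by positivity)).mp
    (norm_sqrtMixDeriv_le ha.le hb.le (hf0 x) (hg0 x))

end SqrtMixCalculus

lemma norm_gradient_eq_norm_fderiv {F : Type*} [NormedAddCommGroup F] [InnerProductSpace ℝ F]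
    [CompleteSpace F] (f : F → ℝ) (x : F) : ‖gradient f x‖ = ‖fderiv ℝ f x‖ := by
  rw [← toDual_gradient, LinearIsometryEquiv.norm_map]

lemma ContDiff.continuous_gradient {F : Type*} [NormedAddCommGroup F] [InnerProductSpace ℝ F]
    [CompleteSpace F] {f : F → ℝ} (hf : ContDiff ℝ 1 f) : Continuous (gradient f) :=
  (InnerProductSpace.toDual ℝ F).symm.continuous.comp (hf.continuous_fderiv one_ne_zero)

section IntegralInequalities

variable {α : Type*} [MeasurableSpace α] {μ : Measure α} {s : Set α}

lemma sq_setIntegral_le_measureReal_mul_setIntegral_sq {f : α → ℝ} (hs : μ s ≠ ⊤)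
    (hf : IntegrableOn f s μ) (hf2 : IntegrableOn (fun x => f x ^ 2) s μ) :
    (∫ x in s, f x ∂μ) ^ 2 ≤ μ.real s * ∫ x in s, f x ^ 2 ∂μ := by
  set A := μ.real s
  set T := ∫ x in s, f x ∂μ
  rcases (measureReal_nonneg : 0 ≤ A).eq_or_lt with hA | hA
  · have hs0 : μ s = 0 := (measureReal_eq_zero_iff hs).mp hA.symm
    simp [T, A, Measure.restrict_eq_zero.mpr hs0]
  have hexpand : ∫ x in s, (A * f x - T) ^ 2 ∂μ = A ^ 2 * ∫ x in s, f x ^ 2 ∂μ - A * T ^ 2 := by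
    have hc : IntegrableOn (fun _ => T ^ 2) s μ := integrableOn_const hs
    have hlin : IntegrableOn (fun x => A ^ 2 * f x ^ 2 - 2 * (A * f x) * T) s μ :=
      (hf2.const_mul _).sub ((hf.const_mul A).const_mul 2 |>.mul_const T)
    simp_rw [sub_sq, mul_pow]
    rw [integral_add hlin hc,
      integral_sub (hf2.const_mul _) (((hf.const_mul A).const_mul 2).mul_const T),
      integral_const_mul, integral_mul_const, integral_const_mul, integral_const_mul,
      setIntegral_const, smul_eq_mul]
    ring
  have : 0 ≤ A * (A * ∫ x in s, f x ^ 2 ∂μ - T ^ 2) := by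
    nlinarith [setIntegral_nonneg_of_ae_restrict (μ := μ) (s := s)
      (f := fun x => (A * f x - T) ^ 2) (Eventually.of_forall fun x => sq_nonneg _)]
  nlinarith [(mul_nonneg_iff_of_pos_left hA).mp this]

lemma mul_setIntegral_le_integral_mul {V g : α → ℝ} {C : ℝ} (hs : MeasurableSet s)
    (hV : ∀ x, 0 ≤ V x) (hg : ∀ x, 0 ≤ g x) (hVs : ∀ x ∈ s, C ≤ V x)
    (hgi : Integrable g μ) (hVg : Integrable (fun x => V x * g x) μ) :
    C * ∫ x in s, g x ∂μ ≤ ∫ x, V x * g x ∂μ :=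
  calc C * ∫ x in s, g x ∂μ = ∫ x in s, C * g x ∂μ := (integral_const_mul _ _).symm
    _ ≤ ∫ x in s, V x * g x ∂μ :=
        setIntegral_mono_on (hgi.const_mul C).integrableOn hVg.integrableOn hs
          fun x hx => mul_le_mul_of_nonneg_right (hVs x hx) (hg x)
    _ ≤ ∫ x, V x * g x ∂μ :=
        setIntegral_le_integral hVg (Eventually.of_forall fun x => mul_nonneg (hV x) (hg x))

end IntegralInequalities

section Energy

variable {V : E3 → ℝ} {βn βs q M : ℝ} {u1 u0 um1 : E3 → ℝ}

def energyDensity (V : E3 → ℝ) (βn βs q : ℝ) (u1 u0 um1 : E3 → ℝ) (x : E3) : ℝ :=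
  ‖gradient u1 x‖ ^ 2 + ‖gradient u0 x‖ ^ 2 + ‖gradient um1 x‖ ^ 2
    + V x * nsq u1 u0 um1 x
    + βn * (nsq u1 u0 um1 x) ^ 2
    + βs * (2 * u0 x ^ 2 * (u1 x - um1 x) ^ 2 + (u1 x ^ 2 - um1 x ^ 2) ^ 2)
    + q * (u1 x ^ 2 + um1 x ^ 2)

lemma energy_eq_integral_energyDensity :
    energy V βn βs q u1 u0 um1 = ∫ x, energyDensity V βn βs q u1 u0 um1 x :=
  rfl

lemma nsq_nonneg (x : E3) : 0 ≤ nsq u1 u0 um1 x := by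
  unfold nsq; positivity

lemma energyDensity_nonneg (hV : ∀ x, 0 ≤ V x) (hβn : 0 ≤ βn) (hβs : 0 ≤ βs) (hq : 0 ≤ q)
    (x : E3) : 0 ≤ energyDensity V βn βs q u1 u0 um1 x := by
  have := hV x
  have := nsq_nonneg (u1 := u1) (u0 := u0) (um1 := um1) x
  unfold energyDensity
  positivity

lemma energy_nonneg (hV : ∀ x, 0 ≤ V x) (hβn : 0 ≤ βn) (hβs : 0 ≤ βs) (hq : 0 ≤ q) :
    0 ≤ energy V βn βs q u1 u0 um1 :=
  integral_nonneg (energyDensity_nonneg hV hβn hβs hq)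

namespace Admissible

lemma integrable_of_abs_le_quartic (hu : Admissible V M u1 u0 um1) {h : E3 → ℝ} {C : ℝ}
    (hh : Continuous h) (hle : ∀ x, |h x| ≤ C * (u1 x ^ 4 + u0 x ^ 4 + um1 x ^ 4)) :
    Integrable h :=
  (((hu.l4_1.add hu.l4_0).add hu.l4_m1).const_mul C).mono' hh.aestronglyMeasurable
    (Eventually.of_forall hle)

lemma integrable_nsq (hu : Admissible V M u1 u0 um1) : Integrable (nsq u1 u0 um1) :=
  (hu.l2_1.add hu.l2_0).add hu.l2_m1

lemma integrable_sq_nsq (hu : Admissible V M u1 u0 um1) :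
    Integrable fun x => nsq u1 u0 um1 x ^ 2 := by
  have := hu.smooth1.continuous; have := hu.smooth0.continuous; have := hu.smoothm1.continuous
  refine hu.integrable_of_abs_le_quartic (C := 3) (by unfold nsq; fun_prop) fun x => ?_
  rw [abs_of_nonneg (sq_nonneg _)]
  unfold nsq
  nlinarith [sq_nonneg (u1 x ^ 2 - u0 x ^ 2), sq_nonneg (u1 x ^ 2 - um1 x ^ 2),
    sq_nonneg (u0 x ^ 2 - um1 x ^ 2)]

lemma integrable_sq_sub_sq (hu : Admissible V M u1 u0 um1) :
    Integrable fun x => (u1 x ^ 2 - um1 x ^ 2) ^ 2 := by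
  have := hu.smooth1.continuous; have := hu.smoothm1.continuous
  refine hu.integrable_of_abs_le_quartic (C := 1) (by fun_prop) fun x => ?_
  rw [abs_of_nonneg (sq_nonneg _)]
  nlinarith [pow_nonneg (hu.nonneg0 x) 4, mul_nonneg (sq_nonneg (u1 x)) (sq_nonneg (um1 x))]

lemma integrable_spin (hu : Admissible V M u1 u0 um1) :
    Integrable fun x => 2 * u0 x ^ 2 * (u1 x - um1 x) ^ 2 + (u1 x ^ 2 - um1 x ^ 2) ^ 2 := by
  have := hu.smooth1.continuous; have := hu.smooth0.continuous; have := hu.smoothm1.continuous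
  refine hu.integrable_of_abs_le_quartic (C := 4) (by fun_prop) fun x => ?_
  rw [abs_of_nonneg (by positivity)]
  nlinarith [sq_nonneg (u0 x ^ 2 - u1 x ^ 2), sq_nonneg (u0 x ^ 2 - um1 x ^ 2),
    sq_nonneg (u1 x + um1 x), mul_nonneg (sq_nonneg (u0 x)) (sq_nonneg (u1 x + um1 x)),
    mul_nonneg (sq_nonneg (u1 x)) (sq_nonneg (um1 x))]

lemma integrable_energyDensity (hu : Admissible V M u1 u0 um1) :
    Integrable (energyDensity V βn βs q u1 u0 um1) :=
  (((((hu.grad2_1.add hu.grad2_0).add hu.grad2_m1).add hu.pot).add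
    (hu.integrable_sq_nsq.const_mul βn)).add (hu.integrable_spin.const_mul βs)).add
    ((hu.l2_1.add hu.l2_m1).const_mul q)

lemma integral_potential_le_energy (hu : Admissible V M u1 u0 um1) (hβn : 0 ≤ βn)
    (hβs : 0 ≤ βs) (hq : 0 ≤ q) :
    ∫ x, V x * nsq u1 u0 um1 x ≤ energy V βn βs q u1 u0 um1 := by
  refine integral_mono hu.pot hu.integrable_energyDensity fun x => ?_
  dsimp only [energyDensity]
  have hkin : 0 ≤ ‖gradient u1 x‖ ^ 2 + ‖gradient u0 x‖ ^ 2 + ‖gradient um1 x‖ ^ 2 := by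
    positivity
  have hint : 0 ≤ βn * nsq u1 u0 um1 x ^ 2 := by positivity
  have hspin : 0 ≤ βs * (2 * u0 x ^ 2 * (u1 x - um1 x) ^ 2 + (u1 x ^ 2 - um1 x ^ 2) ^ 2) := by
    positivity
  have hzee : 0 ≤ q * (u1 x ^ 2 + um1 x ^ 2) := by positivity
  linarith

end Admissible

end Energy

section Mixing

variable {V : E3 → ℝ} {βn βs q M a b : ℝ} {u1 u0 um1 : E3 → ℝ}

lemma sq_norm_gradient_sqrtMix_le {f g : E3 → ℝ} (ha : 0 < a) (hb : 0 < b)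
    (hf : Differentiable ℝ f) (hg : Differentiable ℝ g) (hf0 : ∀ y, 0 ≤ f y)
    (hg0 : ∀ y, 0 ≤ g y) (x : E3) :
    ‖gradient (sqrtMix a b f g) x‖ ^ 2 ≤ a * ‖gradient f x‖ ^ 2 + b * ‖gradient g x‖ ^ 2 := by
  simp only [norm_gradient_eq_norm_fderiv]
  exact sq_norm_fderiv_sqrtMix_le ha hb hf hg hf0 hg0 x

lemma nsq_sqrtMix {f h g : E3 → ℝ} (ha : 0 ≤ a) (hb : 0 ≤ b) (hab : a + b = 1) :
    nsq (sqrtMix a b f g) h (sqrtMix b a f g) = nsq f h g := by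
  funext x
  unfold nsq
  linear_combination sq_sqrtMix_add_sq_sqrtMix_swap (f := f) (g := g) (x := x) ha hb hab

lemma Admissible.mix (hu : Admissible V M u1 u0 um1) (ha : 0 < a) (hb : 0 < b)
    (hab : a + b = 1) :
    Admissible V ((a - b) * M) (sqrtMix a b u1 um1) u0 (sqrtMix b a u1 um1) := by
  have hd1 := hu.smooth1.differentiable one_ne_zero
  have hdm1 := hu.smoothm1.differentiable one_ne_zero
  have hc1 := contDiff_sqrtMix ha hb hu.smooth1 hu.smoothm1 hu.nonneg1 hu.nonnegm1
  have hcm1 := contDiff_sqrtMix hb ha hu.smooth1 hu.smoothm1 hu.nonneg1 hu.nonnegm1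
  have hsq (c d : ℝ) (hc : 0 < c) (hd : 0 < d) :
      (fun x => sqrtMix c d u1 um1 x ^ 2) = fun x => c * u1 x ^ 2 + d * um1 x ^ 2 :=
    funext fun x => sq_sqrtMix hc.le hd.le
  have hnsq := nsq_sqrtMix (h := u0) (f := u1) (g := um1) ha.le hb.le hab
  have hgrad (c d : ℝ) (hc : 0 < c) (hd : 0 < d) :
      Integrable fun x => ‖gradient (sqrtMix c d u1 um1) x‖ ^ 2 := by
    refine ((hu.grad2_1.const_mul c).add (hu.grad2_m1.const_mul d)).mono'
      ((contDiff_sqrtMix hc hd hu.smooth1 hu.smoothm1 hu.nonneg1 hu.nonnegm1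
        ).continuous_gradient.norm.pow 2).aestronglyMeasurable
      (Eventually.of_forall fun x => ?_)
    rw [Real.norm_of_nonneg (by positivity)]
    exact sq_norm_gradient_sqrtMix_le hc hd hd1 hdm1 hu.nonneg1 hu.nonnegm1 x
  have hl4 (c d : ℝ) (hc : 0 < c) (hd : 0 < d) (hcd : c + d = 1) :
      Integrable fun x => sqrtMix c d u1 um1 x ^ 4 :=
    (hu.l4_1.add hu.l4_m1).mono'
      ((contDiff_sqrtMix hc hd hu.smooth1 hu.smoothm1 hu.nonneg1 hu.nonnegm1
        ).continuous.pow 4).aestronglyMeasurable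
      (Eventually.of_forall fun x => by
        rw [Real.norm_of_nonneg (by positivity)]
        exact sqrtMix_pow_four_le hc.le hd.le hcd)
  refine ⟨hc1, hu.smooth0, hcm1, fun _ => Real.sqrt_nonneg _, hu.nonneg0,
    fun _ => Real.sqrt_nonneg _, ?_, hu.l2_0, ?_, hgrad a b ha hb, hu.grad2_0, hgrad b a hb ha,
    hl4 a b ha hb hab, hu.l4_0, hl4 b a hb ha (by linarith), hnsq ▸ hu.pot, hnsq ▸ hu.mass, ?_⟩
  · exact hsq a b ha hb ▸ (hu.l2_1.const_mul a).add (hu.l2_m1.const_mul b)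
  · exact hsq b a hb ha ▸ (hu.l2_1.const_mul b).add (hu.l2_m1.const_mul a)
  · simp_rw [sq_sqrtMix_sub_sq_sqrtMix_swap ha.le hb.le]
    rw [integral_const_mul, hu.magnetization]

lemma energyDensity_mix_add_le (hu : Admissible V M u1 u0 um1) (hβs : 0 ≤ βs)
    (ha : 0 < a) (hb : 0 < b) (hab : a + b = 1) (x : E3) :
    energyDensity V βn βs q (sqrtMix a b u1 um1) u0 (sqrtMix b a u1 um1) x
        + βs * (1 - (a - b) ^ 2) * (u1 x ^ 2 - um1 x ^ 2) ^ 2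
      ≤ energyDensity V βn βs q u1 u0 um1 x := by
  have hd1 := hu.smooth1.differentiable one_ne_zero
  have hdm1 := hu.smoothm1.differentiable one_ne_zero
  have hkin : ‖gradient (sqrtMix a b u1 um1) x‖ ^ 2 + ‖gradient (sqrtMix b a u1 um1) x‖ ^ 2
      ≤ ‖gradient u1 x‖ ^ 2 + ‖gradient um1 x‖ ^ 2 := by
    linear_combination sq_norm_gradient_sqrtMix_le ha hb hd1 hdm1 hu.nonneg1 hu.nonnegm1 x
      + sq_norm_gradient_sqrtMix_le hb ha hd1 hdm1 hu.nonneg1 hu.nonnegm1 x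
      + (‖gradient u1 x‖ ^ 2 + ‖gradient um1 x‖ ^ 2) * hab
  have hsum := sq_sqrtMix_add_sq_sqrtMix_swap (f := u1) (g := um1) (x := x) ha.le hb.le hab
  have hdiff := sq_sqrtMix_sub_sq_sqrtMix_swap (f := u1) (g := um1) (x := x) ha.le hb.le
  have hsub := mul_le_mul_of_nonneg_left
    (sq_sqrtMix_sub_sqrtMix_swap_le (f := u1) (g := um1) (x := x) ha.le hb.le hab)
    (sq_nonneg (u0 x))
  have hspin : 2 * u0 x ^ 2 * (sqrtMix a b u1 um1 x - sqrtMix b a u1 um1 x) ^ 2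
      + (sqrtMix a b u1 um1 x ^ 2 - sqrtMix b a u1 um1 x ^ 2) ^ 2
      + (1 - (a - b) ^ 2) * (u1 x ^ 2 - um1 x ^ 2) ^ 2
      ≤ 2 * u0 x ^ 2 * (u1 x - um1 x) ^ 2 + (u1 x ^ 2 - um1 x ^ 2) ^ 2 := by
    rw [hdiff]
    linear_combination 2 * hsub
  unfold energyDensity
  rw [nsq_sqrtMix ha.le hb.le hab, hsum]
  linarith [mul_le_mul_of_nonneg_left hspin hβs]

lemma energy_mix_add_le (hu : Admissible V M u1 u0 um1) (hβs : 0 ≤ βs)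
    (ha : 0 < a) (hb : 0 < b) (hab : a + b = 1) :
    energy V βn βs q (sqrtMix a b u1 um1) u0 (sqrtMix b a u1 um1)
        + βs * (1 - (a - b) ^ 2) * ∫ x, (u1 x ^ 2 - um1 x ^ 2) ^ 2
      ≤ energy V βn βs q u1 u0 um1 := by
  have hmix := (hu.mix ha hb hab).integrable_energyDensity (βn := βn) (βs := βs) (q := q)
  have hspin := hu.integrable_sq_sub_sq.const_mul (βs * (1 - (a - b) ^ 2))
  rw [energy_eq_integral_energyDensity, energy_eq_integral_energyDensity,
    ← integral_const_mul, ← integral_add hmix hspin]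
  exact integral_mono (hmix.add hspin) hu.integrable_energyDensity
    (energyDensity_mix_add_le hu hβs ha hb hab)

end Mixing

section TrialStates

variable {V : E3 → ℝ} {ψ : E3 → ℝ}

lemma HasCompactSupport.integrable_pow (hψ : Continuous ψ) (hs : HasCompactSupport ψ) {n : ℕ}
    (hn : n ≠ 0) : Integrable fun x => ψ x ^ n :=
  (hψ.pow n).integrable_of_hasCompactSupport (hs.comp_left (zero_pow hn))

lemma HasCompactSupport.integrable_sq_norm_gradient (hψ : ContDiff ℝ 1 ψ)
    (hs : HasCompactSupport ψ) : Integrable fun x => ‖gradient ψ x‖ ^ 2 := by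
  simp_rw [norm_gradient_eq_norm_fderiv]
  have hc : Continuous fun x => ‖fderiv ℝ ψ x‖ ^ 2 := (hψ.continuous_fderiv one_ne_zero).norm.pow 2
  have hsupp : HasCompactSupport fun x => ‖fderiv ℝ ψ x‖ ^ 2 :=
    (hs.fderiv ℝ).comp_left (g := fun L : E3 →L[ℝ] ℝ => ‖L‖ ^ 2) (by simp)
  exact hc.integrable_of_hasCompactSupport hsupp

lemma TrapPotential.integrable_mul_of_hasCompactSupport (hV : TrapPotential V)
    (hψ : Continuous ψ) (hs : HasCompactSupport ψ) : Integrable fun x => V x * ψ x := by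
  obtain ⟨r, hr⟩ := hs.isCompact.isBounded.subset_closedBall (0 : E3)
  obtain ⟨C, hC⟩ := hV.bddOnBalls r
  obtain ⟨D, hD⟩ := hψ.bounded_above_of_compact_support hs
  have hball : IntegrableOn (fun x => V x * ψ x) (Metric.closedBall 0 r) := by
    refine Measure.integrableOn_of_bounded (M := C * D) measure_closedBall_lt_top.ne
      (hV.meas.aestronglyMeasurable.mul hψ.aestronglyMeasurable)
      ((ae_restrict_iff' measurableSet_closedBall).mpr (Eventually.of_forall fun x hx => ?_))
    rw [norm_mul, Real.norm_of_nonneg (hV.nonneg x)]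
    exact mul_le_mul (hC x (mem_closedBall_zero_iff.mp hx)) (hD x) (norm_nonneg _)
      ((hV.nonneg x).trans (hC x (mem_closedBall_zero_iff.mp hx)))
  exact hball.integrable_of_forall_notMem_eq_zero fun x hx => by
    rw [image_eq_zero_of_notMem_tsupport (fun h => hx (hr h)), mul_zero]

lemma admissible_of_hasCompactSupport (hV : TrapPotential V) (hψ : ContDiff ℝ 1 ψ)
    (hs : HasCompactSupport ψ) (hψ0 : ∀ x, 0 ≤ ψ x) {c d M : ℝ} (hc : 0 ≤ c) (hd : 0 ≤ d)
    (hmass : (c ^ 2 + d ^ 2) * ∫ x, ψ x ^ 2 = 1) (hmag : (c ^ 2 - d ^ 2) * ∫ x, ψ x ^ 2 = M) :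
    Admissible V M (fun x => c * ψ x) (fun _ => 0) (fun x => d * ψ x) := by
  have hsmooth (k : ℝ) : ContDiff ℝ 1 fun x => k * ψ x := contDiff_const.mul hψ
  have hsupp (k : ℝ) : HasCompactSupport fun x => k * ψ x := hs.mul_left
  have hl (k : ℝ) {n : ℕ} (hn : n ≠ 0) : Integrable fun x => (k * ψ x) ^ n :=
    (hsupp k).integrable_pow (hsmooth k).continuous hn
  have hnsq : nsq (fun x => c * ψ x) (fun _ => 0) (fun x => d * ψ x)
      = fun x => (c ^ 2 + d ^ 2) * ψ x ^ 2 := by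
    funext x; unfold nsq; ring
  have hzero : HasCompactSupport fun _ : E3 => (0 : ℝ) := HasCompactSupport.zero
  refine ⟨hsmooth c, contDiff_const, hsmooth d, fun x => mul_nonneg hc (hψ0 x), fun _ => le_rfl,
    fun x => mul_nonneg hd (hψ0 x), hl c two_ne_zero,
    hzero.integrable_pow continuous_const two_ne_zero, hl d two_ne_zero,
    (hsupp c).integrable_sq_norm_gradient (hsmooth c),
    hzero.integrable_sq_norm_gradient contDiff_const,
    (hsupp d).integrable_sq_norm_gradient (hsmooth d), hl c four_ne_zero,
    hzero.integrable_pow continuous_const four_ne_zero, hl d four_ne_zero, ?_, ?_, ?_⟩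
  · rw [hnsq]
    exact hV.integrable_mul_of_hasCompactSupport (by fun_prop)
      ((hs.comp_left (g := fun t : ℝ => t ^ 2) (by simp)).mul_left)
  · rw [hnsq, integral_const_mul, hmass]
  · simp_rw [mul_pow, ← sub_mul]
    rw [integral_const_mul, hmag]

lemma exists_admissible (hV : TrapPotential V) {M : ℝ} (h0 : 0 ≤ M) (h1 : M ≤ 1) :
    ∃ u1 u0 um1 : E3 → ℝ, Admissible V M u1 u0 um1 := by
  let φ : ContDiffBump (0 : E3) := ⟨1, 2, one_pos, one_lt_two⟩
  have hI : 0 < ∫ x, φ x ^ 2 :=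
    ((φ.contDiff (n := 0)).continuous.pow 2).integral_pos_of_hasCompactSupport_nonneg_nonzero
      (φ.hasCompactSupport.comp_left (g := fun t : ℝ => t ^ 2) (by simp))
      (fun x => sq_nonneg _) (x := 0)
      (by simp [φ.one_of_mem_closedBall (Metric.mem_closedBall_self zero_le_one)])
  set I := ∫ x, φ x ^ 2
  refine ⟨_, _, _, admissible_of_hasCompactSupport hV φ.contDiff φ.hasCompactSupport
    (fun _ => φ.nonneg) (Real.sqrt_nonneg ((1 + M) / (2 * I)))
    (Real.sqrt_nonneg ((1 - M) / (2 * I))) ?_ ?_⟩ <;>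
  · rw [Real.sq_sqrt (by positivity), Real.sq_sqrt (div_nonneg (by linarith) (by positivity))]
    field_simp
    ring

end TrialStates

section SpinLowerBound

variable {V : E3 → ℝ} {βn βs q M K R : ℝ} {u1 u0 um1 : E3 → ℝ}

lemma Admissible.half_le_setIntegral_closedBall (hV : TrapPotential V)
    (hu : Admissible V M u1 u0 um1) (hβn : 0 ≤ βn) (hβs : 0 ≤ βs) (hq : 0 ≤ q) (hM : 0 < M)
    (hK : 0 < K) (hE : energy V βn βs q u1 u0 um1 ≤ K)
    (hVR : ∀ x : E3, R ≤ ‖x‖ → 2 * K / M ≤ V x) :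
    M / 2 ≤ ∫ x in Metric.closedBall 0 R, (u1 x ^ 2 - um1 x ^ 2) := by
  have hB : MeasurableSet (Metric.closedBall (0 : E3) R) := measurableSet_closedBall
  have htail : 2 * K / M * ∫ x in (Metric.closedBall 0 R)ᶜ, nsq u1 u0 um1 x ≤ K :=
    (mul_setIntegral_le_integral_mul hB.compl hV.nonneg nsq_nonneg
      (fun x hx => hVR x (not_le.mp (by simpa using hx)).le) hu.integrable_nsq hu.pot).trans
      ((hu.integral_potential_le_energy hβn hβs hq).trans hE)
  have hmass : ∫ x in (Metric.closedBall 0 R)ᶜ, nsq u1 u0 um1 x ≤ M / 2 := by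
    rw [div_mul_eq_mul_div, div_le_iff₀ hM] at htail
    nlinarith
  have hcompl : ∫ x in (Metric.closedBall 0 R)ᶜ, (u1 x ^ 2 - um1 x ^ 2)
      ≤ ∫ x in (Metric.closedBall 0 R)ᶜ, nsq u1 u0 um1 x :=
    setIntegral_mono (hu.l2_1.sub hu.l2_m1).integrableOn hu.integrable_nsq.integrableOn
      fun x => by unfold nsq; nlinarith [sq_nonneg (u0 x), sq_nonneg (um1 x)]
  have hsplit := integral_add_compl (f := fun x => u1 x ^ 2 - um1 x ^ 2) hB (hu.l2_1.sub hu.l2_m1)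
  rw [hu.magnetization] at hsplit
  linarith

lemma Admissible.le_integral_sq_sub_sq (hV : TrapPotential V)
    (hu : Admissible V M u1 u0 um1) (hβn : 0 ≤ βn) (hβs : 0 ≤ βs) (hq : 0 ≤ q) (hM : 0 < M)
    (hK : 0 < K) (hE : energy V βn βs q u1 u0 um1 ≤ K)
    (hVR : ∀ x : E3, R ≤ ‖x‖ → 2 * K / M ≤ V x) :
    M ^ 2 / (4 * volume.real (Metric.closedBall (0 : E3) R))
      ≤ ∫ x, (u1 x ^ 2 - um1 x ^ 2) ^ 2 := by
  have hhalf := hu.half_le_setIntegral_closedBall hV hβn hβs hq hM hK hE hVR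
  have hCS := sq_setIntegral_le_measureReal_mul_setIntegral_sq
    (s := Metric.closedBall (0 : E3) R) (f := fun x => u1 x ^ 2 - um1 x ^ 2)
    measure_closedBall_lt_top.ne
    (hu.l2_1.sub hu.l2_m1).integrableOn hu.integrable_sq_sub_sq.integrableOn
  have hsub := setIntegral_le_integral (s := Metric.closedBall (0 : E3) R)
    hu.integrable_sq_sub_sq (Eventually.of_forall fun x => sq_nonneg (u1 x ^ 2 - um1 x ^ 2))
  refine div_le_of_le_mul₀ (by positivity) (integral_nonneg fun x => sq_nonneg _) ?_
  nlinarith [measureReal_nonneg (μ := volume) (s := Metric.closedBall (0 : E3) R)]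

end SpinLowerBound

section GroundEnergy

variable {V : E3 → ℝ} {βn βs q M M' K R : ℝ} {u1 u0 um1 : E3 → ℝ}

lemma groundEnergy_nonneg (hV : ∀ x, 0 ≤ V x) (hβn : 0 ≤ βn) (hβs : 0 ≤ βs) (hq : 0 ≤ q) :
    0 ≤ groundEnergy V βn βs q M :=
  Real.sInf_nonneg <| by rintro _ ⟨_, _, _, _, rfl⟩; exact energy_nonneg hV hβn hβs hq

lemma groundEnergy_le (hV : ∀ x, 0 ≤ V x) (hβn : 0 ≤ βn) (hβs : 0 ≤ βs) (hq : 0 ≤ q)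
    (hu : Admissible V M u1 u0 um1) :
    groundEnergy V βn βs q M ≤ energy V βn βs q u1 u0 um1 :=
  csInf_le ⟨0, by rintro _ ⟨_, _, _, _, rfl⟩; exact energy_nonneg hV hβn hβs hq⟩
    ⟨u1, u0, um1, hu, rfl⟩

lemma exists_energy_lt_groundEnergy_add (hV : TrapPotential V) (h0 : 0 ≤ M) (h1 : M ≤ 1)
    {ε : ℝ} (hε : 0 < ε) :
    ∃ u1 u0 um1 : E3 → ℝ, Admissible V M u1 u0 um1 ∧
      energy V βn βs q u1 u0 um1 < groundEnergy V βn βs q M + ε := by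
  obtain ⟨u1, u0, um1, hu⟩ := exists_admissible hV h0 h1
  obtain ⟨_, ⟨v1, v0, vm1, hv, rfl⟩, hlt⟩ :=
    Real.lt_sInf_add_pos (s := {E : ℝ | ∃ u1 u0 um1 : E3 → ℝ, Admissible V M u1 u0 um1 ∧
      energy V βn βs q u1 u0 um1 = E}) ⟨_, u1, u0, um1, hu, rfl⟩ hε
  exact ⟨v1, v0, vm1, hv, hlt⟩

lemma groundEnergy_le_energy_sub (hV : TrapPotential V) (hβn : 0 ≤ βn) (hβs : 0 ≤ βs)
    (hq : 0 ≤ q) (hM : 0 ≤ M) (hMM' : M < M') (hu : Admissible V M' u1 u0 um1) (hK : 0 < K)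
    (hE : energy V βn βs q u1 u0 um1 ≤ K) (hVR : ∀ x : E3, R ≤ ‖x‖ → 2 * K / M' ≤ V x) :
    groundEnergy V βn βs q M ≤ energy V βn βs q u1 u0 um1
      - βs * (1 - (M / M') ^ 2) * (M' ^ 2 / (4 * volume.real (Metric.closedBall (0 : E3) R))) := by
  have hM' : 0 < M' := hM.trans_lt hMM'
  set r := M / M'
  have hr : r < 1 := (div_lt_one hM').mpr hMM'
  have hr0 : 0 ≤ r := div_nonneg hM hM'.le
  have hab : (1 + r) / 2 + (1 - r) / 2 = 1 := by ring
  have hdiff : (1 + r) / 2 - (1 - r) / 2 = r := by ring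
  have hmix := hu.mix (by linarith) (by linarith) hab
  rw [hdiff, show r * M' = M from div_mul_cancel₀ M hM'.ne'] at hmix
  have hsave := energy_mix_add_le (βn := βn) (q := q) hu hβs (by linarith) (by linarith) hab
  rw [hdiff] at hsave
  have hspin := hu.le_integral_sq_sub_sq hV hβn hβs hq hM' hK hE hVR
  have hcoef : 0 ≤ βs * (1 - r ^ 2) := mul_nonneg hβs (by nlinarith)
  linarith [groundEnergy_le hV.nonneg hβn hβs hq hmix, mul_le_mul_of_nonneg_left hspin hcoef]

end GroundEnergy

/-- the ground-state energy is strictly increasing in the magnetization. -/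
theorem groundEnergy_strictMono_in_M (V : E3 → ℝ) (βn βs q : ℝ)
    (hV : TrapPotential V) (hβn : 0 < βn) (hβs : 0 < βs) (hq : 0 ≤ q) :
    ∀ M M' : ℝ, 0 ≤ M → M < M' → M' ≤ 1 →
      groundEnergy V βn βs q M < groundEnergy V βn βs q M' := by
  intro M M' hM hMM' hM'1
  have hM' : 0 < M' := hM.trans_lt hMM'
  set K := groundEnergy V βn βs q M' + 1
  have hK : 0 < K := by linarith [groundEnergy_nonneg (M := M') hV.nonneg hβn.le hβs.le hq]
  obtain ⟨R, hR, hVR⟩ := hV.tendsToInfty (2 * K / M') (by positivity)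
  have hB : 0 < volume.real (Metric.closedBall (0 : E3) R) :=
    ENNReal.toReal_pos (Metric.measure_closedBall_pos volume 0 hR).ne'
      measure_closedBall_lt_top.ne
  set δ := βs * (1 - (M / M') ^ 2) * (M' ^ 2 / (4 * volume.real (Metric.closedBall (0 : E3) R)))
  have hδ : 0 < δ := by
    have : M / M' < 1 := (div_lt_one hM').mpr hMM'
    have : 0 ≤ M / M' := div_nonneg hM hM'.le
    exact mul_pos (mul_pos hβs (by nlinarith)) (by positivity)
  obtain ⟨u1, u0, um1, hu, hlt⟩ := exists_energy_lt_groundEnergy_add (βn := βn) (βs := βs)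
    (q := q) hV (hM.trans hMM'.le) hM'1 (lt_min one_pos hδ)
  have hgap := groundEnergy_le_energy_sub hV hβn.le hβs.le hq hM hMM' hu hK
    (by linarith [min_le_left 1 δ]) hVR
  linarith [min_le_right 1 δ]
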